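/- Let D_q act on x. Then D_q^n applied to the function x ↦ ₁Φ₁(a; 0; q, bx) := ∑_{m=0}^∞ (-1)^m q^{\binom{m}{2}} (a;q)_m (bx)^m / (q;q)_m equals (-1)^n b^n (a;q)_n q^{\binom{n}{2}} ₁Φ₁(aq^n; 0; q, bxq^n). -/

import Mathlib

/-!
Termwise, `D_q` sends `z ^ (m + 1)` to `(1 - q ^ (m + 1)) z ^ m`, which cancels the last factor of
`(q;q)_(m+1)`, while `(a;q)_(m+1) = (1 - a) (aq;q)_m`. Hence one application of `D_q` to
`z ↦ ₁Φ₁(a; 0; q, bz)` gives `-b (1 - a) ₁Φ₁(aq; 0; q, bqz)`, and the formula follows by induction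
on `n`. The series converge for `‖q‖ < 1` because the ratio of consecutive terms tends to `0`.
-/

open Finset

noncomputable def qPoch (q a : ℂ) (n : ℕ) : ℂ := ∏ j ∈ Finset.range n, (1 - a * q ^ j)

noncomputable def qPochInf (q a : ℂ) : ℂ := ∏' j : ℕ, (1 - a * q ^ j)

noncomputable def cauchyP (q x y : ℂ) (n : ℕ) : ℂ := ∏ j ∈ Finset.range n, (x - q ^ j * y)

noncomputable def qBinom (q : ℂ) (n k : ℕ) : ℂ := qPoch q q n / (qPoch q q k * qPoch q q (n - k))

noncomputable def qDeriv (q : ℂ) (f : ℂ → ℂ) : ℂ → ℂ := fun x => (f x - f (q * x)) / x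

noncomputable def qTheta (q : ℂ) (f : ℂ → ℂ → ℂ) : ℂ → ℂ → ℂ :=
  fun x y => (f (q⁻¹ * x) y - f x (q * y)) / (q⁻¹ * x - y)

/-- `₁Φ₁(a; 0; q, z)` -/
noncomputable def phi11 (q a z : ℂ) : ℂ :=
  ∑' m : ℕ, (-1) ^ m * q ^ m.choose 2 * qPoch q a m * z ^ m / qPoch q q m

/-- generalized Cauchy polynomials `p_n(x,y,a)` -/
noncomputable def genCauchy (q a x y : ℂ) (n : ℕ) : ℂ :=
  ∑ k ∈ Finset.range (n + 1),
    qBinom q n k * (-1) ^ k * q ^ k.choose 2 * qPoch q a k * x ^ (n - k) * y ^ k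

/-- generalized Hahn polynomials `h_n(x,y,a,b|q)` -/
noncomputable def hahn (q x y a b : ℂ) (n : ℕ) : ℂ :=
  ∑ k ∈ Finset.range (n + 1),
    qBinom q n k * (-1) ^ k * q ^ k.choose 2 * b ^ k * qPoch q a k * cauchyP q y x (n - k)

open Filter Topology

noncomputable def phi11Term (q a z : ℂ) (m : ℕ) : ℂ :=
  (-1) ^ m * q ^ m.choose 2 * qPoch q a m * z ^ m / qPoch q q m

lemma phi11_eq_tsum (q a z : ℂ) : phi11 q a z = ∑' m, phi11Term q a z m := rfl

lemma qPoch_succ (q a : ℂ) (m : ℕ) : qPoch q a (m + 1) = qPoch q a m * (1 - a * q ^ m) :=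
  prod_range_succ _ _

lemma qPoch_succ' (q a : ℂ) (m : ℕ) : qPoch q a (m + 1) = (1 - a) * qPoch q (a * q) m := by
  simp only [qPoch, prod_range_succ', pow_zero, mul_one, pow_succ', mul_assoc]
  rw [mul_comm]

lemma Nat.succ_choose_two (m : ℕ) : (m + 1).choose 2 = m.choose 2 + m := by
  rw [Nat.choose_succ_succ', Nat.choose_one_right, add_comm]

lemma phi11Term_zero (q a z : ℂ) : phi11Term q a z 0 = 1 := by
  simp [phi11Term, qPoch]

lemma phi11Term_succ (q a z : ℂ) (m : ℕ) :
    phi11Term q a z (m + 1) =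
      phi11Term q a z m * (-(q ^ m * (1 - a * q ^ m) * z) / (1 - q * q ^ m)) := by
  rw [phi11Term, phi11Term, qPoch_succ, qPoch_succ, Nat.succ_choose_two, div_mul_eq_div_div]
  ring

lemma summable_phi11Term {q : ℂ} (hq : ‖q‖ < 1) (a z : ℂ) : Summable (phi11Term q a z) := by
  have hpow : Tendsto (fun m : ℕ => q ^ m) atTop (𝓝 0) :=
    tendsto_pow_atTop_nhds_zero_of_norm_lt_one hq
  have hratio : Tendsto (fun m : ℕ => -(q ^ m * (1 - a * q ^ m) * z) / (1 - q * q ^ m))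
      atTop (𝓝 0) := by
    have := ((hpow.mul ((hpow.const_mul a).const_sub 1)).mul_const z).neg.div
      ((hpow.const_mul q).const_sub 1) (by simp)
    simpa only [Pi.div_def, mul_zero, zero_mul, sub_zero, neg_zero, zero_div] using this
  refine summable_of_ratio_norm_eventually_le (r := 1 / 2) (by norm_num) ?_
  filter_upwards [(tendsto_zero_iff_norm_tendsto_zero.mp hratio).eventually_le_const
    (by norm_num : (0 : ℝ) < 1 / 2)] with m hm
  rw [phi11Term_succ, norm_mul, mul_comm]
  exact mul_le_mul_of_nonneg_right hm (norm_nonneg _)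

lemma pow_succ_ne_one_of_norm_lt_one {q : ℂ} (hq : ‖q‖ < 1) (m : ℕ) : q ^ (m + 1) ≠ 1 := by
  intro h
  have hlt : ‖q‖ ^ (m + 1) < 1 := pow_lt_one₀ (norm_nonneg q) hq m.succ_ne_zero
  rw [← norm_pow, h, norm_one] at hlt
  exact lt_irrefl _ hlt

lemma phi11Term_succ_sub {q : ℂ} (hq : ‖q‖ < 1) (a b x : ℂ) (m : ℕ) :
    phi11Term q a (b * x) (m + 1) - phi11Term q a (b * (q * x)) (m + 1) =
      -(b * (1 - a) * x) * phi11Term q (a * q) (b * q * x) m := by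
  have hm : 1 - q * q ^ m ≠ 0 := by
    rw [← pow_succ', sub_ne_zero]
    exact (pow_succ_ne_one_of_norm_lt_one hq m).symm
  rw [phi11Term, phi11Term, phi11Term, qPoch_succ', qPoch_succ q q, Nat.succ_choose_two]
  field_simp
  ring

lemma qDeriv_phi11_mul {q : ℂ} (hq : ‖q‖ < 1) (a b : ℂ) {x : ℂ} (hx : x ≠ 0) :
    qDeriv q (fun z => phi11 q a (b * z)) x = -(b * (1 - a)) * phi11 q (a * q) (b * q * x) := by
  have hdiff := (summable_phi11Term hq a (b * x)).sub (summable_phi11Term hq a (b * (q * x)))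
  rw [qDeriv, phi11_eq_tsum, phi11_eq_tsum, phi11_eq_tsum,
    ← (summable_phi11Term hq a (b * x)).tsum_sub (summable_phi11Term hq a (b * (q * x))),
    hdiff.tsum_eq_zero_add]
  simp only [phi11Term_zero, sub_self, zero_add, phi11Term_succ_sub hq, tsum_mul_left]
  field_simp

theorem stmt9 (q : ℝ) (hq0 : 0 < q) (hq1 : q < 1) (a b : ℂ) (n : ℕ) (x : ℂ) (hx : x ≠ 0) :
    (qDeriv (q : ℂ))^[n] (fun z => phi11 (q : ℂ) a (b * z)) x =
      (-1) ^ n * b ^ n * qPoch (q : ℂ) a n * (q : ℂ) ^ n.choose 2 *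
        phi11 (q : ℂ) (a * (q : ℂ) ^ n) (b * x * (q : ℂ) ^ n) := by
  have hq : ‖(q : ℂ)‖ < 1 := by rwa [Complex.norm_real, Real.norm_of_nonneg hq0.le]
  have hq_ne : (q : ℂ) ≠ 0 := by exact_mod_cast hq0.ne'
  induction n generalizing x with
  | zero => simp [qPoch]
  | succ n ih =>
    have hmul (y : ℂ) : b * y * (q : ℂ) ^ n = b * (q : ℂ) ^ n * y := by ring
    have hstep := qDeriv_phi11_mul hq (a * (q : ℂ) ^ n) (b * (q : ℂ) ^ n) hx
    have ha : a * (q : ℂ) ^ n * q = a * (q : ℂ) ^ (n + 1) := by ring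
    have hb : b * (q : ℂ) ^ n * q * x = b * x * (q : ℂ) ^ (n + 1) := by ring
    rw [qDeriv, ha, hb] at hstep
    rw [Function.iterate_succ_apply', qDeriv, ih x hx, ih _ (mul_ne_zero hq_ne hx), hmul, hmul,
      ← mul_sub, mul_div_assoc, hstep, qPoch_succ, Nat.succ_choose_two]
    ring
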